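/- arXiv:1601.07283 — 5 statements merged into one kernel-verified Lean document; each statement's English description precedes it below -/
import Mathlib

section
/- Let q be a prime power, let α be a generator of the multiplicative group of the finite field F_q, let n = q - 1, and let k be a positive integer with k ≤ n such that b = k(n - k + 1)/n is an integer. Then there exists a k × n matrix G over F_q such that: (i) the rows of G span the Reed–Solomon code RS[n,k] = { (m(1), m(α), …, m(α^{n-1})) : m ∈ F_q[X], deg m < k }; (ii) every row of G has exactly n - k + 1 nonzero entries; and (iii) every column of G has exactly b nonzero entries. -/
open Polynomial

section AuxBalancedRS
open Finset


lemma aux_mulXsubC {F : Type*} [Field F] (p : F[X]) (b : F) (l : ℕ) :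
    (p * (X - C b)).coeff l = (if l = 0 then 0 else p.coeff (l-1)) - b * p.coeff l := by
  rw [mul_sub, coeff_sub, coeff_mul_C]
  cases l with
  | zero => simp [coeff_mul_X_zero, mul_comm]
  | succ u => simp [coeff_mul_X, mul_comm]

lemma aux_scale {F : Type*} [Field F] (c : F) (a : ℕ → F) :
    ∀ m l, c^l * (∏ t ∈ range m, (X - C (c * a t))).coeff l
      = c^m * (∏ t ∈ range m, (X - C (a t))).coeff l := by
  intro m
  induction m with
  | zero => intro l; cases l <;> simp [coeff_one]
  | succ m ih =>
    intro l
    rw [prod_range_succ, prod_range_succ, aux_mulXsubC, aux_mulXsubC]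
    cases l with
    | zero =>
      have h0 := ih 0
      simp only [pow_zero, one_mul] at h0
      rw [if_pos rfl, if_pos rfl]
      linear_combination (-(c * a m)) * h0
    | succ u =>
      have h1 := ih u
      have h2 := ih (u+1)
      simp only [Nat.succ_ne_zero, if_false, Nat.add_sub_cancel]
      linear_combination c * h1 - c * a m * h2

lemma aux_coeff_identity {F : Type*} [Field F] (α : F) (m l : ℕ) (hl : l < m) :
    (∏ t ∈ range m, (X - C (α^t))).coeff l * (α^(l+1) - α^(m+1))
      = α^m * (α^(l+1) - 1) * (∏ t ∈ range m, (X - C (α^t))).coeff (l+1) := by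
  set P := ∏ t ∈ range m, (X - C (α^t)) with hP
  set S := ∏ t ∈ range m, (X - C (α^(t+1))) with hS
  have e1 : (∏ t ∈ range (m+1), (X - C (α^t))).coeff (l+1)
      = P.coeff l - α^m * P.coeff (l+1) := by
    rw [prod_range_succ, aux_mulXsubC]
    simp only [Nat.succ_ne_zero, if_false, Nat.add_sub_cancel]
    rfl
  have e2 : (∏ t ∈ range (m+1), (X - C (α^t))).coeff (l+1)
      = S.coeff l - 1 * S.coeff (l+1) := by
    rw [prod_range_succ' (fun t => X - C (α^t)), pow_zero, aux_mulXsubC]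
    simp only [Nat.succ_ne_zero, if_false, Nat.add_sub_cancel]
    rfl
  have hSform : S = ∏ t ∈ range m, (X - C (α * α^t)) := by
    simp only [hS, pow_succ']
  have e3 : α^l * S.coeff l = α^m * P.coeff l := by
    rw [hSform, hP]; exact aux_scale α (fun t => α^t) m l
  have e4 : α^(l+1) * S.coeff (l+1) = α^m * P.coeff (l+1) := by
    rw [hSform, hP]; exact aux_scale α (fun t => α^t) m (l+1)
  linear_combination (-(α^(l+1))) * e1 + α^(l+1) * e2 + α * e3 - e4

lemma aux_coeff_ne {F : Type*} [Field F] {α : F} {n : ℕ} (hα : IsPrimitiveRoot α n)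
    (m : ℕ) (hm : m < n) : ∀ l ≤ m, (∏ t ∈ range m, (X - C (α^t))).coeff l ≠ 0 := by
  have hn0 : n ≠ 0 := by omega
  have hα0 : α ≠ 0 := hα.ne_zero hn0
  set P := ∏ t ∈ range m, (X - C (α^t)) with hP
  have hmonic : P.Monic := monic_prod_of_monic _ _ (fun t _ => monic_X_sub_C _)
  have hdeg : P.natDegree = m := by
    rw [hP, natDegree_prod _ _ (fun t _ => X_sub_C_ne_zero _)]
    simp only [natDegree_X_sub_C, sum_const, card_range, smul_eq_mul, mul_one]
  have key : ∀ d l, l + d = m → P.coeff l ≠ 0 := by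
    intro d
    induction d with
    | zero =>
      intro l hl
      simp only [Nat.add_zero] at hl
      subst hl
      rw [← hdeg, coeff_natDegree, hmonic.leadingCoeff]
      exact one_ne_zero
    | succ d ih =>
      intro l hl
      have hlm : l < m := by omega
      have h1 : P.coeff (l+1) ≠ 0 := ih (l+1) (by omega)
      have h2 : α^(l+1) - 1 ≠ 0 := by
        refine sub_ne_zero.mpr (hα.pow_ne_one_of_pos_of_lt (by omega) (by omega))
      have h3 : α^(l+1) - α^(m+1) ≠ 0 := by
        refine sub_ne_zero.mpr ?_
        intro h
        have : α^(m+1) = α^(l+1) * α^(m-l) := by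
          rw [← pow_add]; congr 1; omega
        rw [this] at h
        have h4 : α^(m-l) = 1 := by
          have : α^(l+1) * 1 = α^(l+1) * α^(m-l) := by rw [mul_one]; exact h
          exact (mul_left_cancel₀ (pow_ne_zero _ hα0) this).symm
        exact hα.pow_ne_one_of_pos_of_lt (by omega) (by omega) h4
      have := aux_coeff_identity α m l hlm
      intro hc
      rw [hc, zero_mul] at this
      exact (mul_ne_zero (mul_ne_zero (pow_ne_zero _ hα0) h2) h1) this.symm
  intro l hl
  exact key (m - l) l (by omega)

lemma aux_fcount (k n : ℕ) (hk : 1 ≤ k) (hkn : k ≤ n) (x : ℕ) (hx : x < n) :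
    (Finset.univ.filter (fun i : Fin k => (i : ℕ) * n / k ≤ x)).card
      = ((x+1)*k + (n-1))/n := by
  have hn : 0 < n := lt_of_lt_of_le hk hkn
  set F := ((x+1)*k + (n-1))/n with hF
  have hiff : ∀ i : ℕ, (i * n / k ≤ x ↔ i < F) := by
    intro i
    have h1 : i * n / k ≤ x ↔ i * n < (x+1)*k := by
      rw [← Nat.lt_succ_iff, Nat.div_lt_iff_lt_mul hk]
    have h2 : F ≤ i ↔ (x+1)*k + (n-1) < (i+1)*n := by
      rw [hF, ← Nat.lt_succ_iff, Nat.div_lt_iff_lt_mul hn]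
    have hin : (i+1)*n = i*n + n := by ring
    constructor
    · intro h
      by_contra hc
      have := h2.mp (le_of_not_gt hc)
      have := h1.mp h
      omega
    · intro h
      rw [h1]
      by_contra hc
      have := h2.mpr (by omega)
      omega
  have hFk : F ≤ k := by
    have h1 : (x+1)*k + (n-1) ≤ n*k + (n-1) := by
      have : (x+1)*k ≤ n*k := Nat.mul_le_mul_right k (by omega)
      omega
    have h2 : (n*k + (n-1))/n = k := by
      rw [Nat.add_comm, Nat.add_mul_div_left _ _ hn, Nat.div_eq_of_lt (by omega)]
      omega
    calc F ≤ (n*k + (n-1))/n := Nat.div_le_div_right h1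
    _ = k := h2
  have heq : (Finset.univ.filter (fun i : Fin k => (i : ℕ) * n / k ≤ x))
      = Finset.univ.filter (fun i : Fin k => (i : ℕ) < F) :=
    Finset.filter_congr (fun i _ => by simpa using hiff i)
  rw [heq, Finset.card_filter, Fin.sum_univ_eq_sum_range (fun i => if i < F then 1 else 0),
    ← Finset.card_filter]
  have : (Finset.range k).filter (fun i => i < F) = Finset.range F := by
    ext a; simp only [Finset.mem_filter, Finset.mem_range]; omega
  rw [this, Finset.card_range]


end AuxBalancedRS

open Finset


/-- For a finite field `F` of (prime-power) order `q`, a generator `α` of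
its multiplicative group, `n = q - 1`, and `1 ≤ k ≤ n` such that `b = k(n-k+1)/n` is an
integer, there is a `k × n` matrix `G` over `F` whose rows span the cyclic Reed–Solomon code
`RS[n,k]`, each row having exactly `n - k + 1` nonzero entries and each column exactly `b`. -/
theorem balanced_reed_solomon_exists
    {F : Type*} [Field F] [Fintype F] [DecidableEq F]
    (α : F) (hα : IsPrimitiveRoot α (Fintype.card F - 1))
    (n k : ℕ) (hn : n = Fintype.card F - 1)
    (hk : 1 ≤ k) (hkn : k ≤ n)
    (b : ℕ) (hbint : n ∣ k * (n - k + 1)) (hb : b = k * (n - k + 1) / n) :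
    ∃ G : Matrix (Fin k) (Fin n) F,
      (Submodule.span F (Set.range (fun i : Fin k => G i)) : Set (Fin n → F)) =
        {c : Fin n → F | ∃ m : Polynomial F,
          m.degree < (k : ℕ) ∧ ∀ j : Fin n, c j = m.eval (α ^ (j : ℕ))} ∧
      (∀ i : Fin k,
        (Finset.univ.filter (fun j : Fin n => G i j ≠ 0)).card = n - k + 1) ∧
      (∀ j : Fin n,
        (Finset.univ.filter (fun i : Fin k => G i j ≠ 0)).card = b) := by
  have hnpos : 0 < n := lt_of_lt_of_le hk hkn
  have hα' : IsPrimitiveRoot α n := by rw [hn]; exact hα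
  have hα0 : α ≠ 0 := hα'.ne_zero (by omega)
  set m := k - 1 with hm
  set s : Fin k → ℕ := fun i => (i : ℕ) * n / k with hs
  set Q : Fin k → F[X] := fun i => ∏ t ∈ range m, (X - C (α ^ (s i + t))) with hQ
  set G : Matrix (Fin k) (Fin n) F := fun i j => (Q i).eval (α ^ (j : ℕ)) with hG
  -- basic arithmetic facts
  have hc : n * b = k * (n - k + 1) := by rw [hb]; exact Nat.mul_div_cancel' hbint
  have hbk : b ≤ k := by
    by_contra h
    have h1 : k * (n - k + 1) ≤ k * n := Nat.mul_le_mul_left k (by omega)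
    have h2 : n * k < n * b := (Nat.mul_lt_mul_left hnpos).mpr (by omega)
    have h3 : k * n = n * k := Nat.mul_comm k n
    linarith
  have hkm : n * (k - b) = k * m := by
    have h1 : n * (k - b) + n * b = n * k := by rw [← Nat.mul_add]; congr 1; omega
    have h2 : k * m + k * (n - k + 1) = k * n := by rw [← Nat.mul_add]; congr 1; omega
    have h3 : k * n = n * k := Nat.mul_comm k n
    linarith
  have hslt : ∀ i : Fin k, s i < n := by
    intro i
    have : (i : ℕ) * n < n * k := by
      calc (i : ℕ) * n < k * n := (Nat.mul_lt_mul_right hnpos).mpr i.isLt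
      _ = n * k := Nat.mul_comm k n
    exact (Nat.div_lt_iff_lt_mul hk).mpr this
  have hpowmod : ∀ a : ℕ, α ^ a = α ^ (a % n) := by
    intro a
    conv_lhs => rw [← Nat.div_add_mod a n]
    rw [pow_add, pow_mul, hα'.pow_eq_one, one_pow, one_mul]
  have hmod2 : ∀ a : ℕ, a < 2 * n → a % n = if a < n then a else a - n := by
    intro a ha
    split
    · exact Nat.mod_eq_of_lt ‹_›
    · rw [Nat.mod_eq_sub_mod (by omega), Nat.mod_eq_of_lt (by omega)]
  have hzero : ∀ (i : Fin k) (j : Fin n), G i j = 0 ↔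
      ∃ t, t < m ∧ ((j : ℕ) = s i + t ∨ (j : ℕ) + n = s i + t) := by
    intro i j
    have : G i j = ∏ t ∈ range m, (α ^ (j : ℕ) - α ^ (s i + t)) := by
      rw [hG, hQ]; simp [eval_prod]
    rw [this, Finset.prod_eq_zero_iff]
    constructor
    · rintro ⟨t, ht, h⟩
      rw [mem_range] at ht
      rw [sub_eq_zero, hpowmod ((j : ℕ)), hpowmod (s i + t)] at h
      have hj : (j : ℕ) % n = (j : ℕ) := Nat.mod_eq_of_lt j.isLt
      have heq : (j : ℕ) % n = (s i + t) % n :=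
        hα'.pow_inj (Nat.mod_lt _ hnpos) (Nat.mod_lt _ hnpos) h
      have hst := hmod2 (s i + t) (by have := hslt i; omega)
      have := hslt i
      refine ⟨t, ht, ?_⟩
      by_cases hlt : s i + t < n <;> simp [hlt] at hst <;> omega
    · rintro ⟨t, ht, h⟩
      refine ⟨t, mem_range.mpr ht, ?_⟩
      rw [sub_eq_zero]
      rcases h with h | h
      · rw [h]
      · rw [hpowmod (s i + t), show (s i + t) = (j : ℕ) + n by omega]
        rw [Nat.add_mod_right, Nat.mod_eq_of_lt j.isLt]
  refine ⟨G, ?_, ?_, ?_⟩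
  · -- span
    have hm_lt_n : m < n := by omega
    set P : F[X] := ∏ t ∈ range m, (X - C (α ^ t)) with hP
    let L : F[X] →ₗ[F] (Fin n → F) :=
      { toFun := fun p j => p.eval (α ^ (j : ℕ))
        map_add' := by intro p q; funext j; simp
        map_smul' := by intro c p; funext j; simp }
    have hLQ : (fun i : Fin k => G i) = ⇑L ∘ Q := rfl
    have hQnd : ∀ i : Fin k, (Q i).natDegree = m := by
      intro i
      rw [hQ]
      rw [natDegree_prod _ _ (fun t _ => X_sub_C_ne_zero _)]
      simp only [natDegree_X_sub_C, sum_const, card_range, smul_eq_mul, mul_one]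
    have hQdeg : ∀ i : Fin k, Q i ∈ degreeLT F k := by
      intro i
      rw [mem_degreeLT]
      calc (Q i).degree ≤ ((Q i).natDegree : WithBot ℕ) := degree_le_natDegree
      _ < (k : WithBot ℕ) := by rw [hQnd i]; exact_mod_cast (show m < k by omega)
    have hsmono : ∀ a c : Fin k, (a : ℕ) < (c : ℕ) → s a < s c := by
      intro a c h
      have h2 : ((a : ℕ) + 1) * n = (a : ℕ) * n + n := by ring
      have h1 : (a : ℕ) * n + k ≤ (c : ℕ) * n := by
        have h3 : ((a : ℕ) + 1) * n ≤ (c : ℕ) * n := Nat.mul_le_mul_right n (by omega)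
        omega
      have h4 : ((a : ℕ) * n + k) / k ≤ ((c : ℕ) * n) / k := Nat.div_le_div_right h1
      rw [Nat.add_div_right _ hk] at h4
      simpa [hs] using h4
    have hsinj : Function.Injective s := by
      intro i1 i2 h
      by_contra hne
      rcases Nat.lt_trichotomy (i1 : ℕ) (i2 : ℕ) with hlt | heq | hgt
      · exact absurd h (Nat.ne_of_lt (hsmono i1 i2 hlt))
      · exact hne (Fin.ext heq)
      · exact absurd h.symm (Nat.ne_of_lt (hsmono i2 i1 hgt))
    set y : Fin k → F := fun i => (α ^ (s i))⁻¹ with hy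
    have hyinj : Function.Injective y := by
      intro i1 i2 h
      apply hsinj
      exact hα'.pow_inj (hslt i1) (hslt i2) (inv_injective h)
    have hQind : LinearIndependent F Q := by
      rw [Fintype.linearIndependent_iff]
      intro g hg
      have hcoeff : ∀ (i : Fin k) (l : ℕ),
          (α ^ (s i)) ^ l * (Q i).coeff l = (α ^ (s i)) ^ m * P.coeff l := by
        intro i l
        have h := aux_scale (α ^ (s i)) (fun t => α ^ t) m l
        have hQform : Q i = ∏ t ∈ range m, (X - C (α ^ (s i) * α ^ t)) := by
          rw [hQ]
          simp only [pow_add]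
        rw [hQform, hP]
        exact h
      set μ : Fin k → F := fun i => g i * (α ^ (s i)) ^ m with hμ
      have hterm : ∀ (i : Fin k) (l : ℕ),
          μ i * y i ^ l * P.coeff l = g i * (Q i).coeff l := by
        intro i l
        have hA : (α ^ (s i)) ^ l ≠ 0 := pow_ne_zero _ (pow_ne_zero _ hα0)
        have h := hcoeff i l
        calc μ i * y i ^ l * P.coeff l
            = g i * (((α ^ (s i)) ^ l)⁻¹ * ((α ^ (s i)) ^ m * P.coeff l)) := by
              simp only [hμ, hy, inv_pow]; ring
          _ = g i * (((α ^ (s i)) ^ l)⁻¹ * ((α ^ (s i)) ^ l * (Q i).coeff l)) := by rw [← h]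
          _ = g i * (Q i).coeff l := by rw [inv_mul_cancel_left₀ hA]
      have hsum0 : ∀ l : ℕ, ∑ i : Fin k, g i * (Q i).coeff l = 0 := by
        intro l
        have := congrArg (fun p : F[X] => p.coeff l) hg
        simpa [finset_sum_coeff, coeff_smul, smul_eq_mul] using this
      have hvdm : ∀ l : Fin k, ∑ i : Fin k, μ i * y i ^ (l : ℕ) = 0 := by
        intro l
        have hPl : P.coeff (l : ℕ) ≠ 0 := by
          rw [hP]
          exact aux_coeff_ne hα' m hm_lt_n (l : ℕ) (by have := l.isLt; omega)
        have h1 : (∑ i : Fin k, μ i * y i ^ (l : ℕ)) * P.coeff (l : ℕ) = 0 := by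
          rw [Finset.sum_mul]
          rw [show (0 : F) = ∑ i : Fin k, g i * (Q i).coeff (l : ℕ) from (hsum0 (l : ℕ)).symm]
          exact Finset.sum_congr rfl (fun i _ => hterm i (l : ℕ))
        rcases mul_eq_zero.mp h1 with h | h
        · exact h
        · exact absurd h hPl
      have hdet : IsUnit (Matrix.vandermonde y).det := by
        rw [Matrix.det_vandermonde, isUnit_iff_ne_zero]
        rw [Finset.prod_ne_zero_iff]
        intro i _
        rw [Finset.prod_ne_zero_iff]
        intro i' hi'
        rw [Finset.mem_Ioi] at hi'
        exact sub_ne_zero.mpr (fun h => absurd (hyinj h) (Fin.ne_of_gt hi'))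
      have hvm : Matrix.vecMul μ (Matrix.vandermonde y) = 0 := by
        funext l
        have := hvdm l
        simpa [Matrix.vecMul, dotProduct, Matrix.vandermonde] using this
      have hμ0 : μ = 0 := by
        have h2 := congrArg (fun v => Matrix.vecMul v (Matrix.vandermonde y)⁻¹) hvm
        simpa [Matrix.vecMul_vecMul, Matrix.mul_nonsing_inv _ hdet, Matrix.vecMul_one,
          Matrix.zero_vecMul] using h2
      intro i
      have h3 := congrFun hμ0 i
      simp only [hμ, Pi.zero_apply] at h3
      rcases mul_eq_zero.mp h3 with h | h
      · exact h
      · exact absurd h (pow_ne_zero _ (pow_ne_zero _ hα0))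
    have hspanQ : Submodule.span F (Set.range Q) = degreeLT F k := by
      haveI : FiniteDimensional F (degreeLT F k) :=
        Module.Finite.equiv (degreeLTEquiv F k).symm
      apply Submodule.eq_of_le_of_finrank_le
      · rw [Submodule.span_le]
        rintro _ ⟨i, rfl⟩
        exact hQdeg i
      · rw [finrank_span_eq_card hQind]
        have h1 : Module.finrank F (degreeLT F k) = k := by
          rw [(degreeLTEquiv F k).finrank_eq, Module.finrank_pi, Fintype.card_fin]
        rw [h1, Fintype.card_fin]
    have hmap : Submodule.span F (Set.range fun i : Fin k => G i)
        = Submodule.map L (degreeLT F k) := by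
      rw [hLQ, Set.range_comp, ← Submodule.map_span, hspanQ]
    rw [hmap]
    ext c
    simp only [SetLike.mem_coe, Submodule.mem_map, Set.mem_setOf_eq]
    constructor
    · rintro ⟨p, hp, rfl⟩
      exact ⟨p, mem_degreeLT.mp hp, fun j => rfl⟩
    · rintro ⟨p, hdeg, hev⟩
      refine ⟨p, mem_degreeLT.mpr hdeg, ?_⟩
      funext j
      exact (hev j).symm
  · -- row weights
    intro i
    have hzimage : Finset.univ.filter (fun j : Fin n => G i j = 0)
        = (range m).image (fun t => (⟨(s i + t) % n, Nat.mod_lt _ hnpos⟩ : Fin n)) := by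
      ext j
      simp only [mem_filter, mem_univ, true_and, mem_image, mem_range]
      rw [hzero i j]
      have hsi := hslt i
      constructor
      · rintro ⟨t, ht, h⟩
        refine ⟨t, ht, ?_⟩
        apply Fin.ext
        simp only
        have hst := hmod2 (s i + t) (by omega)
        by_cases hlt : s i + t < n <;> simp [hlt] at hst <;> omega
      · rintro ⟨t, ht, h⟩
        have hj : (j : ℕ) = (s i + t) % n := by rw [← h]
        have hst := hmod2 (s i + t) (by omega)
        have hjlt := j.isLt
        refine ⟨t, ht, ?_⟩
        by_cases hlt : s i + t < n <;> simp [hlt] at hst <;> omega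
    have hinj : Set.InjOn (fun t => (⟨(s i + t) % n, Nat.mod_lt _ hnpos⟩ : Fin n))
        ↑(range m) := by
      intro t1 h1 t2 h2 h
      simp only [coe_range, Set.mem_Iio] at h1 h2
      have := congrArg Fin.val h
      simp only at this
      have hsi := hslt i
      have hs1 := hmod2 (s i + t1) (by omega)
      have hs2 := hmod2 (s i + t2) (by omega)
      by_cases l1 : s i + t1 < n <;> by_cases l2 : s i + t2 < n <;>
        simp [l1] at hs1 <;> simp [l2] at hs2 <;> omega
    have hcard0 : (Finset.univ.filter (fun j : Fin n => G i j = 0)).card = m := by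
      rw [hzimage, Finset.card_image_of_injOn hinj, card_range]
    have hsplit : (Finset.univ.filter (fun j : Fin n => G i j ≠ 0)).card
        = n - (Finset.univ.filter (fun j : Fin n => G i j = 0)).card := by
      rw [Finset.filter_not, Finset.card_sdiff_of_subset (Finset.filter_subset _ _)]
      simp
    rw [hsplit, hcard0]
    omega
  · -- column weights
    intro j
    have hzero' : ∀ i : Fin k, (G i j = 0 ↔
        (s i ≤ (j : ℕ) ∧ (j : ℕ) < s i + m) ∨ ((j : ℕ) + n < s i + m)) := by
      intro i
      rw [hzero i j]
      have hsi := hslt i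
      have hjlt := j.isLt
      constructor
      · rintro ⟨t, ht, h⟩; omega
      · rintro (⟨h1, h2⟩ | h)
        · exact ⟨(j : ℕ) - s i, by omega, by omega⟩
        · exact ⟨(j : ℕ) + n - s i, by omega, by omega⟩
    have hsplit : (Finset.univ.filter (fun i : Fin k => G i j ≠ 0)).card
        = k - (Finset.univ.filter (fun i : Fin k => G i j = 0)).card := by
      rw [Finset.filter_not, Finset.card_sdiff_of_subset (Finset.filter_subset _ _)]
      simp
    have hzcard : (Finset.univ.filter (fun i : Fin k => G i j = 0)).card = k - b := by
      by_cases hcase : m ≤ (j : ℕ)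
      · -- no wraparound
        have hset : Finset.univ.filter (fun i : Fin k => G i j = 0)
            = (Finset.univ.filter (fun i : Fin k => s i ≤ (j : ℕ)))
              \ (Finset.univ.filter (fun i : Fin k => s i ≤ (j : ℕ) - m)) := by
          ext i
          simp only [mem_sdiff, mem_filter, mem_univ, true_and]
          rw [hzero' i]
          have := hslt i
          omega
        have hsub : (Finset.univ.filter (fun i : Fin k => s i ≤ (j : ℕ) - m))
            ⊆ (Finset.univ.filter (fun i : Fin k => s i ≤ (j : ℕ))) := by
          intro i hi
          simp only [mem_filter, mem_univ, true_and] at hi ⊢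
          omega
        rw [hset, Finset.card_sdiff_of_subset hsub,
          aux_fcount k n hk hkn (j : ℕ) j.isLt,
          aux_fcount k n hk hkn ((j : ℕ) - m) (by omega)]
        have hstep : ((j : ℕ) + 1) * k = ((j : ℕ) - m + 1) * k + n * (k - b) := by
          have h1 : (j : ℕ) + 1 = ((j : ℕ) - m + 1) + m := by omega
          rw [h1, add_mul, hkm, Nat.mul_comm k m]
        have harith : (((j : ℕ) + 1) * k + (n - 1)) / n
            = ((((j : ℕ) - m + 1)) * k + (n - 1)) / n + (k - b) := by
          rw [hstep, show ((j : ℕ) - m + 1) * k + n * (k - b) + (n - 1)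
            = (((j : ℕ) - m + 1) * k + (n - 1)) + n * (k - b) by ring,
            Nat.add_mul_div_left _ _ hnpos]
        omega
      · -- wraparound
        have hset : Finset.univ.filter (fun i : Fin k => G i j = 0)
            = (Finset.univ.filter (fun i : Fin k => s i ≤ (j : ℕ)))
              ∪ (Finset.univ.filter (fun i : Fin k => ¬ (s i ≤ (j : ℕ) + n - m))) := by
          ext i
          simp only [mem_union, mem_filter, mem_univ, true_and]
          rw [hzero' i]
          have := hslt i
          omega
        have hdisj : Disjoint (Finset.univ.filter (fun i : Fin k => s i ≤ (j : ℕ)))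
            (Finset.univ.filter (fun i : Fin k => ¬ (s i ≤ (j : ℕ) + n - m))) := by
          rw [Finset.disjoint_left]
          intro i hi hi'
          simp only [mem_filter, mem_univ, true_and] at hi hi'
          omega
        have hcompl : (Finset.univ.filter (fun i : Fin k => ¬ (s i ≤ (j : ℕ) + n - m))).card
            = k - (Finset.univ.filter (fun i : Fin k => s i ≤ (j : ℕ) + n - m)).card := by
          rw [Finset.filter_not, Finset.card_sdiff_of_subset (Finset.filter_subset _ _)]
          simp
        have hlt2 : (j : ℕ) + n - m < n := by omega
        have hle2 : (Finset.univ.filter (fun i : Fin k => s i ≤ (j : ℕ) + n - m)).card ≤ k := by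
          calc _ ≤ (Finset.univ : Finset (Fin k)).card := Finset.card_filter_le _ _
          _ = k := by simp
        rw [hset, Finset.card_union_of_disjoint hdisj, hcompl,
          aux_fcount k n hk hkn (j : ℕ) j.isLt,
          aux_fcount k n hk hkn ((j : ℕ) + n - m) hlt2] at *
        have hstep : ((j : ℕ) + n - m + 1) * k = ((j : ℕ) + 1) * k + n * b := by
          have h1 : (j : ℕ) + n - m + 1 = ((j : ℕ) + 1) + (n - k + 1) := by omega
          rw [h1, add_mul, hc, Nat.mul_comm k (n - k + 1)]
        have harith : (((j : ℕ) + n - m + 1) * k + (n - 1)) / n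
            = (((j : ℕ) + 1) * k + (n - 1)) / n + b := by
          rw [hstep, show ((j : ℕ) + 1) * k + n * b + (n - 1)
            = (((j : ℕ) + 1) * k + (n - 1)) + n * b by ring,
            Nat.add_mul_div_left _ _ hnpos]
        omega
    rw [hsplit, hzcard]
    omega
end

section
/- Let q be a prime power, let α be a generator of the multiplicative group of F_q, and let k be an integer with 1 ≤ k < q. Define p(x) = ∏_{i=0}^{k-2}(x - α^i) ∈ F_q[X], and for an integer j define p^{(j)}(x) = p(α^j x). If j_1, …, j_k are integers that are pairwise distinct modulo q - 1, then the k polynomials p^{(j_1)}(x), …, p^{(j_k)}(x) are linearly independent over F_q. -/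
open Polynomial

lemma coeff_comp_C_mul_X {F : Type*} [CommRing F] (p : F[X]) (a : F) (m : ℕ) :
    (p.comp (C a * X)).coeff m = a ^ m * p.coeff m := by
  induction p using Polynomial.induction_on' with
  | add p q hp hq => simp [add_comp, hp, hq, mul_add]
  | monomial n c =>
    simp only [monomial_comp, mul_pow, ← C_pow, ← mul_assoc, ← C_mul, coeff_C_mul, coeff_X_pow,
      coeff_monomial, mul_ite, mul_zero, mul_one]
    by_cases h : n = m
    · simp [h, mul_comm]
    · have h' : ¬ m = n := fun hh => h hh.symm
      simp [h, h']

lemma funceq {F : Type*} [Field F] (α : F) (hα0 : α ≠ 0) (n : ℕ) :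
    (X - C (α ^ n)) * ((∏ i ∈ Finset.range (n + 1), (X - C (α ^ i))).comp (C α * X)) =
      C (α ^ (n + 1)) * (X - C α⁻¹) * ∏ i ∈ Finset.range (n + 1), (X - C (α ^ i)) := by
  rw [prod_comp]
  have h1 : ∀ i : ℕ, (X - C (α ^ i)).comp (C α * X) = C α * (X - C (α ^ i * α⁻¹)) := by
    intro i
    rw [sub_comp, X_comp, C_comp, mul_sub, ← C_mul, mul_comm (α ^ i) α⁻¹, ← mul_assoc,
      mul_inv_cancel₀ hα0, one_mul]
  simp_rw [h1]
  rw [Finset.prod_mul_distrib, Finset.prod_const]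
  have h2 : ∏ i ∈ Finset.range (n + 1), (X - C (α ^ i * α⁻¹)) =
      (∏ i ∈ Finset.range n, (X - C (α ^ i))) * (X - C α⁻¹) := by
    rw [Finset.prod_range_succ']
    congr 1
    · apply Finset.prod_congr rfl
      intro i _
      congr 2
      rw [pow_succ, mul_assoc, mul_inv_cancel₀ hα0, mul_one]
    · rw [pow_zero, one_mul]
  rw [h2, Finset.prod_range_succ]
  simp only [Finset.card_range, ← C_pow, pow_succ, pow_add, pow_one, C_mul]
  ring

lemma coeff_prod_ne_zero {F : Type*} [Field F] (α : F) (hα0 : α ≠ 0) (n : ℕ)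
    (h1 : ∀ m : ℕ, 1 ≤ m → m ≤ n → α ^ m ≠ 1) :
    ∀ r ≤ n, (∏ i ∈ Finset.range n, (X - C (α ^ i))).coeff r ≠ 0 := by
  cases n with
  | zero => intro r hr; interval_cases r; simp
  | succ N =>
    set P := ∏ i ∈ Finset.range (N + 1), (X - C (α ^ i)) with hP
    have hmonic : P.Monic := monic_prod_of_monic _ _ (fun i _ => monic_X_sub_C _)
    have hdeg : P.natDegree = N + 1 := by
      rw [hP, natDegree_prod_of_monic _ _ (fun i _ => monic_X_sub_C _)]
      simp only [natDegree_X_sub_C, Finset.sum_const, Finset.card_range, smul_eq_mul, mul_one]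
    have hlead : P.coeff (N + 1) = 1 := by
      have := hmonic.coeff_natDegree
      rwa [hdeg] at this
    have key : ∀ r, r ≤ N → P.coeff (r + 1) ≠ 0 → P.coeff r ≠ 0 := by
      intro r hr hnext h0
      have heq := funceq α hα0 N
      have hc := congrArg (fun p => coeff p (r + 1)) heq
      rw [mul_comm (X - C (α ^ N)) _, coeff_mul_X_sub_C,
        show C (α ^ (N + 1)) * (X - C α⁻¹) * P = C (α ^ (N + 1)) * (P * (X - C α⁻¹)) by ring,
        coeff_C_mul, coeff_mul_X_sub_C, coeff_comp_C_mul_X, coeff_comp_C_mul_X, h0] at hc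
      have hinv : α ^ (N + 1) * α⁻¹ = α ^ N := by
        rw [pow_succ, mul_assoc, mul_inv_cancel₀ hα0, mul_one]
      have hfac : P.coeff (r + 1) * (α ^ N * (α ^ (r + 1) - 1)) = 0 := by
        linear_combination -hc + P.coeff (r + 1) * hinv
      rcases mul_eq_zero.mp hfac with h | h
      · exact hnext h
      · rcases mul_eq_zero.mp h with h | h
        · exact pow_ne_zero _ hα0 h
        · exact h1 (r + 1) (by omega) (by omega) (by rwa [sub_eq_zero] at h)
    intro r hr
    have main : ∀ d, d ≤ N + 1 → P.coeff (N + 1 - d) ≠ 0 := by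
      intro d
      induction d with
      | zero => intro _; rw [Nat.sub_zero, hlead]; exact one_ne_zero
      | succ d ih =>
        intro hd
        have h2 := ih (by omega)
        have hr' : N + 1 - (d + 1) ≤ N := by omega
        refine key _ hr' ?_
        rw [show N + 1 - (d + 1) + 1 = N + 1 - d by omega]
        exact h2
    have := main (N + 1 - r) (by omega)
    rwa [show N + 1 - (N + 1 - r) = r by omega] at this

/-- Let `α` generate the multiplicative group of the finite field `F` of
order `q`, and `1 ≤ k < q`. With `p(x) = ∏_{i=0}^{k-2} (x - α^i)` and
`p^{(j)}(x) = p(α^j x)`, if `j 1, …, j k` are pairwise distinct modulo `q - 1`, then the `k`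
polynomials `p^{(j l)}` are linearly independent over `F`. -/
theorem scaled_polynomials_linearIndependent
    {F : Type*} [Field F] [Fintype F]
    (α : F) (hα : IsPrimitiveRoot α (Fintype.card F - 1))
    (k : ℕ) (hk : 1 ≤ k) (hkq : k < Fintype.card F)
    (j : Fin k → ℤ)
    (hj : ∀ l l' : Fin k,
      Int.ModEq ((Fintype.card F - 1 : ℕ) : ℤ) (j l) (j l') → l = l') :
    LinearIndependent F
      (fun l : Fin k =>
        (∏ i ∈ Finset.range (k - 1), (X - C (α ^ i))).comp (C (α ^ (j l)) * X)) := by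
  have hcard : 1 < Fintype.card F := Fintype.one_lt_card
  have hα0 : α ≠ 0 := by
    intro h
    have h2 := hα.pow_eq_one
    rw [h, zero_pow (by omega)] at h2
    exact zero_ne_one h2
  have h1 : ∀ m : ℕ, 1 ≤ m → m ≤ k - 1 → α ^ m ≠ 1 := by
    intro m hm1 hm2 h
    have hd := (hα.pow_eq_one_iff_dvd m).mp h
    have := Nat.le_of_dvd (by omega) hd
    omega
  have hcoeff := coeff_prod_ne_zero α hα0 (k - 1) h1
  rw [Fintype.linearIndependent_iff]
  intro g hg
  have hβinj : Function.Injective (fun l => α ^ (j l)) := by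
    intro l l' h
    simp only at h
    have hone : α ^ (j l - j l') = 1 := by
      rw [zpow_sub₀ hα0, h, div_self (zpow_ne_zero _ hα0)]
    have hd := (hα.zpow_eq_one_iff_dvd _).mp hone
    exact hj l l' (Int.ModEq.symm (Int.modEq_iff_dvd.mpr hd))
  have hsum : ∀ m : Fin k, ∑ l, g l * (α ^ (j l)) ^ (m : ℕ) = 0 := by
    intro m
    have hc := congrArg (fun p => coeff p (m : ℕ)) hg
    simp only [finset_sum_coeff, coeff_smul, coeff_comp_C_mul_X, smul_eq_mul,
      coeff_zero] at hc
    have hPm : (∏ i ∈ Finset.range (k - 1), (X - C (α ^ i))).coeff (m : ℕ) ≠ 0 :=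
      hcoeff (m : ℕ) (by omega)
    have hc2 : (∑ l, g l * (α ^ (j l)) ^ (m : ℕ)) *
        (∏ i ∈ Finset.range (k - 1), (X - C (α ^ i))).coeff (m : ℕ) = 0 := by
      rw [Finset.sum_mul]
      rw [← hc]
      apply Finset.sum_congr rfl
      intro l _
      ring
    rcases mul_eq_zero.mp hc2 with h | h
    · exact h
    · exact absurd h hPm
  have hzero := Matrix.eq_zero_of_forall_pow_sum_mul_pow_eq_zero hβinj hsum
  intro l
  exact congrFun hzero l
end

section
/- Let n and k be positive integers with k ≤ n, set d = n - k + 1, and suppose b = k·d/n is an integer. Let a ∈ {0,1}^n be the vector consisting of d ones followed by k - 1 zeros, and let A be the n × n circulant matrix whose i-th row (0 ≤ i ≤ n-1) is a cyclically shifted left by i positions, i.e., A[i][j] = a[(j + i) mod n]. Let g = gcd(k, n) and let v ∈ {0,1}^n be the concatenation of g copies of the block consisting of k/g ones followed by (d-1)/g zeros. Then v has exactly k nonzero entries and v·A = (b, b, …, b), i.e., for every column j, ∑_{i=0}^{n-1} v_i · A[i][j] = b. -/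
private lemma rot1 (h : ℕ → ℕ) (m : ℕ) :
    ∑ i ∈ Finset.range m, h ((i + 1) % m) = ∑ i ∈ Finset.range m, h (i % m) := by
  cases m with
  | zero => simp
  | succ m' =>
    rw [Finset.sum_range_succ, Finset.sum_range_succ' (fun i => h (i % (m' + 1)))]
    simp [Nat.mod_self]

private lemma sum_shift (f : ℕ → ℕ) (m c : ℕ) :
    ∑ i ∈ Finset.range m, f ((i + c) % m) = ∑ i ∈ Finset.range m, f (i % m) := by
  induction c with
  | zero => simp
  | succ c ih =>
    have h1 : ∀ i ∈ Finset.range m,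
        f ((i + (c + 1)) % m) = (fun x => f ((x + c) % m)) ((i + 1) % m) := by
      intro i _
      simp only [Nat.mod_add_mod]
      rw [show i + 1 + c = i + (c + 1) from by omega]
    rw [Finset.sum_congr rfl h1, rot1 (fun x => f ((x + c) % m)) m]
    simp only [Nat.mod_add_mod]
    exact ih

private lemma sum_mul_range (f : ℕ → ℕ) (q m : ℕ) (hf : ∀ i, f (i + m) = f i) :
    ∑ i ∈ Finset.range (q * m), f i = q * ∑ i ∈ Finset.range m, f i := by
  have key : ∀ t i, f (t * m + i) = f i := by
    intro t
    induction t with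
    | zero => simp
    | succ t ih =>
      intro i
      have : (t + 1) * m + i = (t * m + i) + m := by ring
      rw [this, hf, ih]
  induction q with
  | zero => simp
  | succ q ih =>
    rw [Nat.succ_mul, Finset.sum_range_add, ih]
    have : ∑ i ∈ Finset.range m, f (q * m + i) = ∑ i ∈ Finset.range m, f i :=
      Finset.sum_congr rfl (fun i _ => key q i)
    rw [this]; ring

/-- For positive integers `k ≤ n` with `d = n - k + 1` and `b = k·d/n` an
integer, let `a` be the 0-1 vector of `d` ones followed by `k - 1` zeros, let `A` be the
circulant matrix with `A i j = a ((j + i) mod n)`, `g = gcd(k, n)`, and let `v` be the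
concatenation of `g` copies of the block of `k/g` ones followed by `(d-1)/g` zeros.
Then `v` has exactly `k` nonzero entries and `v · A = (b, …, b)`. -/
theorem balanced_mask_selection
    (n k : ℕ) (hk : 0 < k) (hkn : k ≤ n)
    (d : ℕ) (hd : d = n - k + 1)
    (g : ℕ) (hg : g = Nat.gcd k n)
    (b : ℕ) (hbint : n ∣ k * d) (hb : b = k * d / n)
    (a : Fin n → ℕ) (ha : ∀ i : Fin n, a i = if (i : ℕ) < d then 1 else 0)
    (A : Matrix (Fin n) (Fin n) ℕ)
    (hA : ∀ i j : Fin n,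
      A i j = a ⟨((j : ℕ) + (i : ℕ)) % n, Nat.mod_lt _ (Nat.lt_of_lt_of_le hk hkn)⟩)
    (v : Fin n → ℕ)
    (hv : ∀ i : Fin n,
      v i = if (i : ℕ) % (k / g + (d - 1) / g) < k / g then 1 else 0) :
    (Finset.univ.filter (fun i : Fin n => v i ≠ 0)).card = k ∧
    ∀ j : Fin n, (∑ i : Fin n, v i * A i j) = b := by
  have hn : 0 < n := Nat.lt_of_lt_of_le hk hkn
  have hgk : g ∣ k := hg ▸ Nat.gcd_dvd_left k n
  have hgn : g ∣ n := hg ▸ Nat.gcd_dvd_right k n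
  have hg0 : 0 < g := hg ▸ Nat.gcd_pos_of_pos_left n hk
  set k' := k / g with hk'
  set m := n / g with hm
  have hk'g : k' * g = k := Nat.div_mul_cancel hgk
  have hmg : m * g = n := Nat.div_mul_cancel hgn
  have hm0 : 0 < m := Nat.div_pos (Nat.le_of_dvd hn hgn) hg0
  have hk'0 : 0 < k' := Nat.div_pos (Nat.le_of_dvd hk hgk) hg0
  have hk'm : k' ≤ m := Nat.div_le_div_right hkn
  have hdn : d ≤ n := by omega
  have hmn : m ∣ n := ⟨g, hmg.symm⟩
  have hblock : k / g + (d - 1) / g = m := by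
    have h1 : d - 1 = n - k := by omega
    rw [h1, ← Nat.add_div_of_dvd_right hgk]
    congr 1
    omega
  have hcop : Nat.Coprime k' m := by
    rw [hk', hm, hg]
    exact Nat.coprime_div_gcd_div_gcd (hg ▸ hg0)
  have hmd : m ∣ d := by
    have h1 : m * g ∣ (k' * d) * g := by
      rw [hmg]
      have : k' * d * g = k * d := by rw [← hk'g]; ring
      rw [this]; exact hbint
    have h2 : m ∣ k' * d := Nat.dvd_of_mul_dvd_mul_right hg0 h1
    exact hcop.symm.dvd_of_dvd_mul_left h2
  set e := d / m with he
  have hem : e * m = d := Nat.div_mul_cancel hmd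
  have hbe : b = k' * e := by
    have h1 : k * d = (k' * e) * n := by rw [← hk'g, ← hem, ← hmg]; ring
    rw [hb, h1, Nat.mul_div_cancel _ hn]
  -- the basic counting lemma
  have hcount : ∀ c : ℕ, (∑ i ∈ Finset.range m,
      (if (i + c) % m < k' then 1 else 0)) = k' := by
    intro c
    rw [sum_shift (fun x => if x < k' then 1 else 0) m c]
    have h1 : ∀ i ∈ Finset.range m,
        (if i % m < k' then (1:ℕ) else 0) = if i < k' then 1 else 0 := by
      intro i hi
      rw [Nat.mod_eq_of_lt (Finset.mem_range.mp hi)]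
    rw [Finset.sum_congr rfl h1, ← Finset.card_filter]
    have h2 : (Finset.range m).filter (fun i => i < k') = Finset.range k' := by
      ext i; simp; omega
    rw [h2, Finset.card_range]
  constructor
  · -- cardinality part
    have h1 : (Finset.univ.filter (fun i : Fin n => v i ≠ 0)) =
        Finset.univ.filter (fun i : Fin n => (i : ℕ) % m < k') := by
      apply Finset.filter_congr
      intro i _
      rw [hv, hblock]
      split <;> simp_all
    rw [h1, Finset.card_filter]
    rw [Fin.sum_univ_eq_sum_range (fun x => if x % m < k' then 1 else 0) n]
    rw [show n = g * m from by rw [← hmg, Nat.mul_comm]]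
    rw [sum_mul_range (fun x => if x % m < k' then 1 else 0) g m
      (by intro i; simp [Nat.add_mod_right])]
    have := hcount 0
    simp only [Nat.add_zero] at this
    rw [this, Nat.mul_comm]
    exact hk'g
  · -- sum part
    intro j
    set c := n - (j : ℕ) with hc
    have hjn : (j : ℕ) < n := j.isLt
    set G : ℕ → ℕ := fun x =>
      (if x % m < k' then 1 else 0) * (if ((j : ℕ) + x) % n < d then 1 else 0) with hG
    have hGmod : ∀ x, G (x % n) = G x := by
      intro x
      simp only [hG]
      rw [Nat.mod_mod_of_dvd x hmn, Nat.add_mod_mod]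
    have h1 : (∑ i : Fin n, v i * A i j) = ∑ i ∈ Finset.range n, G i := by
      rw [← Fin.sum_univ_eq_sum_range G n]
      apply Finset.sum_congr rfl
      intro i _
      rw [hv, hA, ha, hblock]
    have h2 : ∑ i ∈ Finset.range n, G i = ∑ i ∈ Finset.range n, G ((i + c) % n) := by
      rw [sum_shift G n c]
      apply Finset.sum_congr rfl
      intro i hi
      rw [Nat.mod_eq_of_lt (Finset.mem_range.mp hi)]
    have h3 : ∀ i ∈ Finset.range n, G ((i + c) % n) =
        (if (i + c) % m < k' then 1 else 0) * (if i < d then 1 else 0) := by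
      intro i hi
      have hi' : i < n := Finset.mem_range.mp hi
      simp only [hG]
      congr 1
      · rw [Nat.mod_mod_of_dvd _ hmn]
      · rw [Nat.add_mod_mod]
        have : (j : ℕ) + (i + c) = i + n := by omega
        rw [this, Nat.add_mod_right, Nat.mod_eq_of_lt hi']
    have h4 : ∑ i ∈ Finset.range n, G ((i + c) % n) =
        ∑ i ∈ Finset.range d, (if (i + c) % m < k' then 1 else 0) := by
      rw [Finset.sum_congr rfl h3]
      rw [show n = d + (n - d) from by omega, Finset.sum_range_add]
      have hz : ∑ i ∈ Finset.range (n - d),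
          ((if (d + i + c) % m < k' then (1:ℕ) else 0) *
            (if d + i < d then 1 else 0)) = 0 := by
        apply Finset.sum_eq_zero
        intro i _
        rw [if_neg (show ¬ (d + i < d) from by omega)]
        ring
      rw [hz, add_zero]
      apply Finset.sum_congr rfl
      intro i hi
      rw [if_pos (Finset.mem_range.mp hi), mul_one]
    rw [h1, h2, h4, ← hem]
    rw [sum_mul_range (fun x => if (x + c) % m < k' then 1 else 0) e m
      (by intro i; beta_reduce; rw [show i + m + c = (i + c) + m from by ring,
        Nat.add_mod_right])]
    rw [hcount c, hbe]
    ring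
end

section
/- Let q be a prime power, let α be a generator of the multiplicative group of F_q, and let k be an integer with 1 ≤ k < q. Then every coefficient of the polynomial p(x) = ∏_{i=0}^{k-2}(x - α^i) ∈ F_q[X] in degrees 0 through k - 1 is nonzero; in particular p has exactly k nonzero coefficients. -/
open Polynomial

lemma key_qbinom {R : Type*} [CommRing R] [Nontrivial R] (α : R) (m i : ℕ) :
    (∏ l ∈ Finset.range m, (X - C (α ^ l))).coeff i *
      ((∏ t ∈ Finset.range i, (α ^ (t + 1) - 1)) *
        ∏ t ∈ Finset.range (m - i), (α ^ (t + 1) - 1)) =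
      if i ≤ m then
        (-1 : R) ^ (m - i) * α ^ ((m - i).choose 2) *
          ∏ t ∈ Finset.range m, (α ^ (t + 1) - 1)
      else 0 := by
  induction m generalizing i with
  | zero =>
    cases i with
    | zero => simp
    | succ j => simp [Polynomial.coeff_one]
  | succ m ih =>
    have hmon : (∏ l ∈ Finset.range m, (X - C (α ^ l))).Monic :=
      monic_prod_of_monic _ _ fun l _ => monic_X_sub_C _
    have hdeg : (∏ l ∈ Finset.range m, (X - C (α ^ l))).natDegree = m := by
      rw [natDegree_prod_of_monic _ _ fun l _ => monic_X_sub_C _]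
      simp only [natDegree_X_sub_C, Finset.sum_const, Finset.card_range, smul_eq_mul, mul_one]
    rw [Finset.prod_range_succ]
    cases i with
    | zero =>
      have h0 := ih 0
      simp only [Nat.sub_zero, Finset.range_zero, Finset.prod_empty, one_mul,
        Nat.zero_le, if_true] at h0 ⊢
      have hc : (m + 1).choose 2 = m.choose 2 + m := by
        rw [Nat.choose_succ_succ, Nat.choose_one_right, Nat.add_comm]
      have hX0 : (X - C (α ^ m)).coeff 0 = -(α ^ m) := by
        rw [coeff_sub, coeff_X_zero, coeff_C_zero]; ring
      rw [mul_coeff_zero, Finset.prod_range_succ, hc, pow_add, pow_succ, hX0]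
      linear_combination (-(α ^ m) * (α ^ (m + 1) - 1)) * h0
    | succ j =>
      rw [coeff_mul_X_sub_C]
      by_cases hjm : j ≤ m
      · rcases Nat.lt_or_ge j m with hlt | hge
        · obtain ⟨s, rfl⟩ : ∃ s, m = j + 1 + s := ⟨m - (j + 1), by omega⟩
          have h1 := ih j
          have h2 := ih (j + 1)
          have e1 : j + 1 + s - j = s + 1 := by omega
          have e2 : j + 1 + s - (j + 1) = s := by omega
          have e3 : j + 1 + s + 1 - (j + 1) = s + 1 := by omega
          have hc : (s + 1).choose 2 = s.choose 2 + s := by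
            rw [Nat.choose_succ_succ, Nat.choose_one_right, Nat.add_comm]
          rw [e1, if_pos (by omega), hc, pow_add,
            Finset.prod_range_succ (fun t => α ^ (t + 1) - 1) s] at h1
          rw [e2, if_pos (by omega),
            Finset.prod_range_succ (fun t => α ^ (t + 1) - 1) j] at h2
          rw [e3, if_pos (by omega), hc, pow_add,
            Finset.prod_range_succ (fun t => α ^ (t + 1) - 1) (j + 1 + s),
            Finset.prod_range_succ (fun t => α ^ (t + 1) - 1) s,
            Finset.prod_range_succ (fun t => α ^ (t + 1) - 1) j]
          linear_combination (α ^ (j + 1) - 1) * h1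
            - α ^ (j + 1 + s) * (α ^ (s + 1) - 1) * h2
        · have hje : j = m := le_antisymm hjm hge
          subst hje
          have hA : (∏ l ∈ Finset.range j, (X - C (α ^ l))).coeff j = 1 := by
            have := hmon.coeff_natDegree
            rwa [hdeg] at this
          have hB : (∏ l ∈ Finset.range j, (X - C (α ^ l))).coeff (j + 1) = 0 :=
            coeff_eq_zero_of_natDegree_lt (by omega)
          rw [hA, hB]
          simp
      · rw [if_neg (by omega)]
        have hA : (∏ l ∈ Finset.range m, (X - C (α ^ l))).coeff j = 0 :=
          coeff_eq_zero_of_natDegree_lt (by omega)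
        have hB : (∏ l ∈ Finset.range m, (X - C (α ^ l))).coeff (j + 1) = 0 :=
          coeff_eq_zero_of_natDegree_lt (by omega)
        rw [hA, hB]
        ring

/-- Let `α` generate the multiplicative group of the finite field `F` of
order `q` and let `1 ≤ k < q`. Then every coefficient in degrees `0, …, k-1` of
`p(x) = ∏_{i=0}^{k-2}(x - α^i)` is nonzero; in particular `p` has exactly `k` nonzero
coefficients. -/
theorem consecutive_roots_all_coeffs_nonzero
    {F : Type*} [Field F] [Fintype F]
    (α : F) (hα : IsPrimitiveRoot α (Fintype.card F - 1))
    (k : ℕ) (hk : 1 ≤ k) (hkq : k < Fintype.card F) :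
    (∀ i < k, (∏ l ∈ Finset.range (k - 1), (X - C (α ^ l))).coeff i ≠ 0) ∧
    (∏ l ∈ Finset.range (k - 1), (X - C (α ^ l))).support.card = k := by
  have hq : 2 ≤ Fintype.card F := Fintype.one_lt_card
  have hα0 : α ≠ 0 := by
    intro h
    have h1 : α ^ (Fintype.card F - 1) = 1 := hα.pow_eq_one
    rw [h, zero_pow (by omega)] at h1
    exact zero_ne_one h1
  have hD : ∀ n ≤ Fintype.card F - 2,
      (∏ t ∈ Finset.range n, (α ^ (t + 1) - 1)) ≠ 0 := by
    intro n hn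
    rw [Finset.prod_ne_zero_iff]
    intro t ht
    rw [Finset.mem_range] at ht
    have := hα.pow_ne_one_of_pos_of_lt (l := t + 1) (by omega) (by omega)
    exact sub_ne_zero.mpr this
  have hcoeff : ∀ i < k, (∏ l ∈ Finset.range (k - 1), (X - C (α ^ l))).coeff i ≠ 0 := by
    intro i hi
    have hkey := key_qbinom α (k - 1) i
    rw [if_pos (by omega)] at hkey
    intro h0
    rw [h0, zero_mul] at hkey
    have hne : (-1 : F) ^ (k - 1 - i) * α ^ ((k - 1 - i).choose 2) *
        ∏ t ∈ Finset.range (k - 1), (α ^ (t + 1) - 1) ≠ 0 := by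
      apply mul_ne_zero
      apply mul_ne_zero
      · exact pow_ne_zero _ (neg_ne_zero.mpr one_ne_zero)
      · exact pow_ne_zero _ hα0
      · exact hD (k - 1) (by omega)
    exact hne hkey.symm
  refine ⟨hcoeff, ?_⟩
  have hdeg : (∏ l ∈ Finset.range (k - 1), (X - C (α ^ l))).natDegree = k - 1 := by
    rw [natDegree_prod_of_monic _ _ fun l _ => monic_X_sub_C _]
    simp only [natDegree_X_sub_C, Finset.sum_const, Finset.card_range, smul_eq_mul, mul_one]
  have hsupp : (∏ l ∈ Finset.range (k - 1), (X - C (α ^ l))).support = Finset.range k := by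
    ext i
    rw [mem_support_iff, Finset.mem_range]
    constructor
    · intro h
      by_contra hik
      exact h (coeff_eq_zero_of_natDegree_lt (by omega))
    · exact fun h => hcoeff i h
  rw [hsupp, Finset.card_range]
end

section
/- Let q be a prime power, let α be a generator of the multiplicative group of F_q, let n = q - 1, let k be a positive integer with k ≤ n such that b = k(n - k + 1)/n is an integer, and set d = n - k + 1. Then there exist integers j_1, …, j_k, pairwise distinct modulo n, and codewords c_1, …, c_k of the Reed–Solomon code RS[n,k] = { (m(1), m(α), …, m(α^{n-1})) : m ∈ F_q[X], deg m < k } such that: (i) for each l, the entry of c_l in coordinate j (0 ≤ j ≤ n-1) is zero if and only if j ≡ d - j_l + i (mod n) for some 0 ≤ i ≤ k - 2, so each c_l has exactly d nonzero entries; (ii) for every coordinate j, exactly b of the codewords c_1, …, c_k are nonzero at coordinate j; and (iii) c_1, …, c_k are linearly independent over F_q and hence span RS[n,k]. -/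
open Polynomial Finset Matrix

/-- Coefficients of the scaled-roots product. -/
lemma rs_coeff_scale {F : Type*} [CommRing F] (α β : F) :
    ∀ (w j : ℕ), β ^ j * (∏ i ∈ Finset.range w, (X - C (β * α ^ i))).coeff j
      = β ^ w * (∏ i ∈ Finset.range w, (X - C (α ^ i))).coeff j := by
  intro w
  induction w with
  | zero =>
    intro j
    rcases j with _ | j <;> simp [Polynomial.coeff_one]
  | succ w ih =>
    intro j
    rw [Finset.prod_range_succ, Finset.prod_range_succ]
    rcases j with _ | j
    · have h0 : ∀ (p : F[X]) (r : F), (p * (X - C r)).coeff 0 = p.coeff 0 * (-r) := by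
        intro p r
        rw [Polynomial.mul_coeff_zero]
        simp
      rw [h0, h0]
      have := ih 0
      simp only [pow_zero, one_mul] at this
      rw [this]
      ring
    · rw [Polynomial.coeff_mul_X_sub_C, Polynomial.coeff_mul_X_sub_C]
      have h1 := ih j
      have h2 := ih (j + 1)
      have : β ^ (j+1) * ((∏ i ∈ Finset.range w, (X - C (β * α ^ i))).coeff j
          - (∏ i ∈ Finset.range w, (X - C (β * α ^ i))).coeff (j+1) * (β * α ^ w))
          = β * (β ^ j * (∏ i ∈ Finset.range w, (X - C (β * α ^ i))).coeff j)
            - (β * α ^ w) * (β ^ (j+1) * (∏ i ∈ Finset.range w, (X - C (β * α ^ i))).coeff (j+1)) := by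
        ring
      rw [this, h1, h2]
      ring

/-- All coefficients of `∏_{i<w} (X - α^i)` are nonzero when `α` has order `n > w`. -/
lemma rs_coeff_ne_zero {F : Type*} [Field F] {α : F} {n : ℕ}
    (hα : IsPrimitiveRoot α n) {w : ℕ} (hw : w < n) :
    ∀ j ≤ w, (∏ i ∈ Finset.range w, (X - C (α ^ i))).coeff j ≠ 0 := by
  have hn : 0 < n := by omega
  have hα0 : α ≠ 0 := hα.ne_zero hn.ne'
  set P : F[X] := ∏ i ∈ Finset.range w, (X - C (α ^ i)) with hP
  -- leading coefficient
  have hmonic : P.Monic := monic_prod_of_monic _ _ fun i _ => monic_X_sub_C _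
  have hdeg : P.natDegree = w := by
    rw [hP, natDegree_prod]
    · simp only [natDegree_X_sub_C]
      simp
    · intro i _
      exact X_sub_C_ne_zero (α ^ i)
  have hcw : P.coeff w = 1 := by
    have := hmonic.coeff_natDegree
    rwa [hdeg] at this
  -- the key descent identity
  have key : ∀ j, j < w → (α ^ (w+1) - α ^ (j+1)) * P.coeff j
      = (α ^ w - α ^ (w + j + 1)) * P.coeff (j+1) := by
    intro j hj
    set R : F[X] := ∏ i ∈ Finset.range w, (X - C (α * α ^ i)) with hR
    have hB : ∏ i ∈ Finset.range (w+1), (X - C (α ^ i)) = R * (X - C 1) := by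
      rw [Finset.prod_range_succ']
      congr 1
      · exact Finset.prod_congr rfl fun i _ => by rw [pow_succ']
      · simp
    have hA : ∏ i ∈ Finset.range (w+1), (X - C (α ^ i)) = P * (X - C (α ^ w)) :=
      Finset.prod_range_succ _ _
    have hcoeff : P.coeff j - P.coeff (j+1) * α ^ w = R.coeff j - R.coeff (j+1) * 1 := by
      have := hA.symm.trans hB
      have h2 := congrArg (fun p : F[X] => p.coeff (j+1)) this
      simpa only [Polynomial.coeff_mul_X_sub_C] using h2
    have s1 : α ^ j * R.coeff j = α ^ w * P.coeff j := rs_coeff_scale α α w j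
    have s2 : α ^ (j+1) * R.coeff (j+1) = α ^ w * P.coeff (j+1) := rs_coeff_scale α α w (j+1)
    have hm := congrArg (fun x => α ^ (j+1) * x) hcoeff
    simp only [mul_sub] at hm
    have e1 : α ^ (j+1) * R.coeff j = α * (α ^ j * R.coeff j) := by ring
    have e2 : α ^ (j+1) * (R.coeff (j+1) * 1) = α ^ (j+1) * R.coeff (j+1) := by ring
    rw [e1, e2, s1, s2] at hm
    -- hm : α^{j+1} c_j - α^{j+1} (c_{j+1} α^w) = α (α^w c_j) - (α^w c_{j+1})
    linear_combination -hm
  -- descent: coeff (j+1) ≠ 0 → coeff j ≠ 0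
  have step : ∀ j, j < w → P.coeff (j+1) ≠ 0 → P.coeff j ≠ 0 := by
    intro j hj hne hcj
    have hk := key j hj
    rw [hcj, mul_zero] at hk
    have hfac : α ^ w - α ^ (w + j + 1) ≠ 0 := by
      intro h0
      have h1 : α ^ w * (1 - α ^ (j+1)) = 0 := by linear_combination h0
      rcases mul_eq_zero.1 h1 with h | h
      · exact pow_ne_zero w hα0 h
      · have : α ^ (j+1) = 1 := by linear_combination -h
        exact hα.pow_ne_one_of_pos_of_lt (Nat.succ_ne_zero j) (by omega) this
    exact hfac (by
      have := hk.symm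
      rcases mul_eq_zero.1 this with h | h
      · exact h
      · exact absurd h hne)
  -- downward induction
  have main : ∀ i j, j + i = w → P.coeff j ≠ 0 := by
    intro i
    induction i with
    | zero => intro j hj; rw [Nat.add_zero] at hj; subst hj; rw [hcw]; exact one_ne_zero
    | succ i ih =>
      intro j hj
      exact step j (by omega) (ih (j+1) (by omega))
  intro j hj
  exact main (w - j) j (by omega)

/-- Window counting: starts `l*n/k` for `l < k`; every cyclic window of length `w`
contains exactly `r` of them, where `k*w = r*n`. -/
lemma rs_window_count (n k w r : ℕ) (hk : 0 < k) (hw : w < n)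
    (hr : k * w = r * n) (t : ℤ) :
    ((Finset.range k).filter (fun l => ∃ i : ℕ, i < w ∧
        ((l * n / k : ℕ) : ℤ) ≡ t - i [ZMOD n])).card = r := by
  have hn : 0 < n := by omega
  have hn' : (0 : ℤ) < n := by exact_mod_cast hn
  have hk' : (0 : ℤ) < k := by exact_mod_cast hk
  have hrk : r < k := by
    rcases Nat.lt_or_ge r k with h | h
    · exact h
    · exfalso; nlinarith [hr, hw, hn, hk]
  set σ : ℤ → ℤ := fun x => x * n / k with hσ
  set A : ℤ := t - w + 1 with hA
  set LA : ℤ := (A * k + n - 1) / n with hLA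
  -- characterization of LA
  have e1 : ∀ x : ℤ, LA ≤ x ↔ A * k ≤ x * n := by
    intro x
    have h1 : x + 1 ≤ LA ↔ (x + 1) * n ≤ A * k + n - 1 := Int.le_ediv_iff_mul_le hn'
    have hring : (x + 1) * n = x * n + n := by ring
    rw [hring] at h1
    constructor
    · intro h
      by_contra hcon
      push_neg at hcon
      have : x + 1 ≤ LA := h1.mpr (by linarith)
      linarith
    · intro h
      by_contra hcon
      push_neg at hcon
      have := h1.mp (by linarith)
      linarith
  have e2 : ∀ x : ℤ, A ≤ σ x ↔ A * k ≤ x * n := fun x => Int.le_ediv_iff_mul_le hk'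
  have e3 : ∀ x : ℤ, σ x < A + w ↔ x * n < (A + w) * k := fun x => Int.ediv_lt_iff_lt_mul hk'
  have hrw : (A + w) * k = A * k + r * n := by
    have : (k : ℤ) * w = r * n := by exact_mod_cast hr
    linear_combination this
  -- membership characterization
  have mem_iff : ∀ x : ℤ, (LA ≤ x ∧ x < LA + r) ↔ (A ≤ σ x ∧ σ x < A + w) := by
    intro x
    have h1 := e1 x
    have h2 := e1 (x - r)
    have h3 := e2 x
    have h4 := e3 x
    have hring : (x - r) * n = x * n - r * n := by ring
    rw [hring] at h2
    constructor
    · rintro ⟨ha, hb⟩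
      refine ⟨h3.mpr (h1.mp ha), h4.mpr ?_⟩
      have : ¬ (LA ≤ x - r) := by linarith
      rw [h2] at this
      push_neg at this
      linarith
    · rintro ⟨ha, hb⟩
      refine ⟨h1.mpr (h3.mp ha), ?_⟩
      have hx : x * n < A * k + r * n := by linarith [h4.mp hb]
      have : ¬ (A * k ≤ x * n - r * n) := by linarith
      have := (not_iff_not.mpr h2).mpr (by push_neg; linarith)
      push_neg at this
      linarith
  -- shift property of σ
  have hshift : ∀ (x c : ℤ), σ (x + c * k) = σ x + c * n := by
    intro x c
    show (x + c * k) * n / k = x * n / k + c * n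
    have : (x + c * k) * n = x * n + (c * n) * k := by ring
    rw [this, Int.add_mul_ediv_right _ _ hk'.ne']
  -- the bijection
  have hcard : (Finset.Ico LA (LA + (r:ℤ))).card = r := by
    rw [Int.card_Ico]
    simp
  rw [← hcard]
  symm
  apply Finset.card_bij (fun (l' : ℤ) _ => (l' % (k:ℤ)).toNat)
  · -- maps to
    intro l' hl'
    rw [Finset.mem_Ico] at hl'
    obtain ⟨hA1, hA2⟩ := (mem_iff l').mp hl'
    have hmod0 : (0:ℤ) ≤ l' % k := Int.emod_nonneg l' hk'.ne'
    have hmodk : l' % k < k := Int.emod_lt_of_pos l' hk'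
    rw [Finset.mem_filter, Finset.mem_range]
    constructor
    · omega
    · -- the witness i
      refine ⟨(t - σ l').toNat, ?_, ?_⟩
      · omega
      · have hcast : (((l' % k).toNat * n / k : ℕ) : ℤ) = σ (l' % k) := by
          push_cast [Int.natCast_ediv]
          rw [Int.toNat_of_nonneg hmod0]
        rw [hcast]
        have hl'eq : l' % k + (l' / k) * k = l' := by linarith [Int.emod_add_mul_ediv l' k]
        have hsig : σ (l' % k) + (l' / k) * n = σ l' := by rw [← hshift, hl'eq]
        have htn : ((t - σ l').toNat : ℤ) = t - σ l' := Int.toNat_of_nonneg (by omega)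
        rw [htn]
        have h6 : t - (t - σ l') = σ l' := by ring
        rw [h6]
        show σ (l' % k) % (n:ℤ) = σ l' % (n:ℤ)
        rw [← hsig, Int.add_mul_emod_self_right]
  · -- injective
    intro x hx y hy hxy
    rw [Finset.mem_Ico] at hx hy
    have h1 : x % k = y % k := by
      have hx0 : (0:ℤ) ≤ x % k := Int.emod_nonneg x hk'.ne'
      have hy0 : (0:ℤ) ≤ y % k := Int.emod_nonneg y hk'.ne'
      omega
    have hdvd : (k : ℤ) ∣ y - x := Int.ModEq.dvd h1
    have : y - x = 0 := Int.eq_zero_of_abs_lt_dvd hdvd (by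
      rw [abs_lt]
      constructor <;> [linarith [hx.1, hy.2]; linarith [hy.1, hx.2]]
      )
    omega
  · -- surjective
    intro l hl
    rw [Finset.mem_filter, Finset.mem_range] at hl
    obtain ⟨hlk, i, hiw, hmod⟩ := hl
    have hcast : ((l * n / k : ℕ) : ℤ) = σ (l : ℤ) := by
      push_cast [Int.natCast_ediv]
      rfl
    rw [hcast] at hmod
    obtain ⟨c, hc⟩ := (Int.modEq_iff_dvd.mp hmod)
    -- hc : (t - i) - σ l = n * c
    refine ⟨(l : ℤ) + c * k, ?_, ?_⟩
    · rw [Finset.mem_Ico]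
      apply (mem_iff _).mpr
      rw [hshift]
      have hval : σ (l : ℤ) + c * (n:ℤ) = t - i := by linear_combination -hc
      rw [hval]
      constructor
      · omega
      · omega
    · have : ((l : ℤ) + c * k) % k = (l : ℤ) % k := Int.add_mul_emod_self_right _ _ _
      rw [this, Int.emod_eq_of_lt (by positivity) (by exact_mod_cast hlk)]
      simp

/-- The residues `s + i mod n`, `i < w ≤ n`, hit exactly `w` coordinates in `Fin n`. -/
lemma rs_zero_count (n s w : ℕ) (hn : 0 < n) (hw : w ≤ n) :
    (Finset.univ.filter (fun t : Fin n => ∃ i : ℕ, i < w ∧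
        ((t : ℕ) : ℤ) ≡ (s : ℤ) + i [ZMOD n])).card = w := by
  conv_rhs => rw [← Finset.card_range w]
  symm
  apply Finset.card_bij (fun (i : ℕ) _ => (⟨(s + i) % n, Nat.mod_lt _ hn⟩ : Fin n))
  · intro i hi
    rw [Finset.mem_range] at hi
    rw [Finset.mem_filter]
    refine ⟨Finset.mem_univ _, i, hi, ?_⟩
    have : (s + i) % n ≡ s + i [MOD n] := Nat.mod_modEq _ _
    have := (Int.natCast_modEq_iff).mpr this
    simpa using this
  · intro i₁ h₁ i₂ h₂ heq
    rw [Finset.mem_range] at h₁ h₂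
    have : (s + i₁) % n = (s + i₂) % n := by
      simpa using congrArg Fin.val heq
    have hm : i₁ % n = i₂ % n := Nat.ModEq.add_left_cancel' s this
    rwa [Nat.mod_eq_of_lt (by omega), Nat.mod_eq_of_lt (by omega)] at hm
  · intro t ht
    rw [Finset.mem_filter] at ht
    obtain ⟨-, i, hi, hmod⟩ := ht
    refine ⟨i, Finset.mem_range.mpr hi, ?_⟩
    have hmod' : (t : ℕ) ≡ s + i [MOD n] := by
      rw [← Int.natCast_modEq_iff]
      simpa using hmod
    have : (t : ℕ) % n = (s + i) % n := hmod'
    rw [Nat.mod_eq_of_lt t.isLt] at this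
    exact Fin.ext this.symm

/-- Transfer a filter-card over `Fin k` to one over `range k`. -/
lemma rs_fin_card (k : ℕ) (p : ℕ → Prop) [DecidablePred p] :
    (Finset.univ.filter (fun l : Fin k => p (l : ℕ))).card
      = ((Finset.range k).filter p).card := by
  apply Finset.card_bij (fun (l : Fin k) _ => (l : ℕ))
  · intro l hl
    rw [Finset.mem_filter] at hl ⊢
    exact ⟨Finset.mem_range.mpr l.isLt, hl.2⟩
  · intro a _ b _ h
    exact Fin.ext h
  · intro l hl
    rw [Finset.mem_filter, Finset.mem_range] at hl
    exact ⟨⟨l, hl.1⟩, Finset.mem_filter.mpr ⟨Finset.mem_univ _, hl.2⟩, rfl⟩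

/-- For a finite field `F` of order `q`, a generator `α` of its
multiplicative group, `n = q - 1`, `1 ≤ k ≤ n` with `b = k(n-k+1)/n` an integer and
`d = n - k + 1`, there are integers `j 1, …, j k`, pairwise distinct mod `n`, and
codewords `c 1, …, c k` of `RS[n,k]` such that: (i) `c l` vanishes at coordinate `t` iff
`t ≡ d - j l + i (mod n)` for some `0 ≤ i ≤ k - 2`, so each `c l` has exactly `d` nonzero
entries; (ii) at every coordinate exactly `b` of the `c l` are nonzero; and (iii) the
`c l` are linearly independent and hence span `RS[n,k]`. -/
theorem balanced_reed_solomon_codewords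
    {F : Type*} [Field F] [Fintype F] [DecidableEq F]
    (α : F) (hα : IsPrimitiveRoot α (Fintype.card F - 1))
    (n k d b : ℕ) (hn : n = Fintype.card F - 1)
    (hk : 1 ≤ k) (hkn : k ≤ n)
    (hd : d = n - k + 1)
    (hbint : n ∣ k * d) (hb : b = k * d / n) :
    ∃ (j : Fin k → ℤ) (c : Fin k → Fin n → F),
      (∀ l l' : Fin k, Int.ModEq (n : ℤ) (j l) (j l') → l = l') ∧
      (∀ l : Fin k, c l ∈ {w : Fin n → F | ∃ m : Polynomial F,
          m.degree < (k : ℕ) ∧ ∀ t : Fin n, w t = m.eval (α ^ (t : ℕ))}) ∧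
      (∀ (l : Fin k) (t : Fin n), c l t = 0 ↔
          ∃ i : ℕ, i < k - 1 ∧ Int.ModEq (n : ℤ) (t : ℤ) ((d : ℤ) - j l + (i : ℤ))) ∧
      (∀ l : Fin k, (Finset.univ.filter (fun t : Fin n => c l t ≠ 0)).card = d) ∧
      (∀ t : Fin n, (Finset.univ.filter (fun l : Fin k => c l t ≠ 0)).card = b) ∧
      LinearIndependent F c ∧
      (Submodule.span F (Set.range c) : Set (Fin n → F)) =
        {w : Fin n → F | ∃ m : Polynomial F,
          m.degree < (k : ℕ) ∧ ∀ t : Fin n, w t = m.eval (α ^ (t : ℕ))} := by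
  have hα' : IsPrimitiveRoot α n := hn ▸ hα
  have hn0 : 0 < n := by omega
  have hk0 : 0 < k := hk
  set w : ℕ := k - 1 with hwdef
  have hwk : w + 1 = k := by omega
  have hwn : w < n := by omega
  -- the start points
  set s : Fin k → ℕ := fun l => (l : ℕ) * n / k with hs
  have hs_lt : ∀ l : Fin k, s l < n := by
    intro l
    rw [hs]
    rw [Nat.div_lt_iff_lt_mul hk0]
    nlinarith [l.isLt, hn0]
  have hs_mono : ∀ l l' : Fin k, (l : ℕ) < (l' : ℕ) → s l < s l' := by
    intro l l' hll
    have h1 : (l : ℕ) * n / k + 1 = ((l : ℕ) * n + k) / k := (Nat.add_div_right _ hk0).symm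
    have h2 : (l : ℕ) * n + k ≤ (l' : ℕ) * n := by
      have : ((l : ℕ) + 1) * n = (l : ℕ) * n + n := by ring
      nlinarith [Nat.mul_le_mul_right n hll]
    calc s l < s l + 1 := Nat.lt_succ_self _
      _ = ((l : ℕ) * n + k) / k := h1
      _ ≤ (l' : ℕ) * n / k := Nat.div_le_div_right h2
  have hs_inj : Function.Injective s := by
    intro l l' h
    rcases lt_trichotomy (l : ℕ) (l' : ℕ) with hlt | heq | hgt
    · exact absurd h (hs_mono l l' hlt).ne
    · exact Fin.ext heq
    · exact absurd h.symm (hs_mono l' l hgt).ne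
  -- modular exponent equality
  have hred : ∀ a : ℕ, α ^ a = α ^ (a % n) := by
    intro a
    conv_lhs => rw [← Nat.mod_add_div a n]
    rw [pow_add, pow_mul, hα'.pow_eq_one, one_pow, mul_one]
  have powmod : ∀ a b : ℕ, α ^ a = α ^ b ↔ a ≡ b [MOD n] := by
    intro a b
    constructor
    · intro h
      have h2 : α ^ (a % n) = α ^ (b % n) := by rw [← hred, ← hred, h]
      exact hα'.pow_inj (Nat.mod_lt _ hn0) (Nat.mod_lt _ hn0) h2
    · intro h
      rw [hred a, hred b]
      unfold Nat.ModEq at h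
      rw [h]
  -- the polynomials and codewords
  set m : Fin k → Polynomial F := fun l => ∏ i ∈ Finset.range w, (X - C (α ^ (s l + i))) with hm
  set c : Fin k → Fin n → F := fun l t => (m l).eval (α ^ (t : ℕ)) with hc
  -- basic polynomial facts
  have hm_monic : ∀ l, (m l).Monic := fun l =>
    monic_prod_of_monic _ _ fun i _ => monic_X_sub_C _
  have hm_deg : ∀ l, (m l).natDegree = w := by
    intro l
    rw [hm]
    rw [natDegree_prod]
    · simp only [natDegree_X_sub_C]
      simp
    · intro i _
      exact X_sub_C_ne_zero _
  have hm_degree : ∀ l, (m l).degree = (w : WithBot ℕ) := by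
    intro l
    rw [Polynomial.degree_eq_natDegree (hm_monic l).ne_zero, hm_deg l]
  have hm_deg_lt : ∀ l, (m l).degree < (k : ℕ) := by
    intro l
    rw [hm_degree l]
    exact_mod_cast Nat.lt_of_lt_of_le (Nat.lt_succ_self w) (le_of_eq hwk)
  -- the vanishing characterization
  have hzero : ∀ (l : Fin k) (t : Fin n), c l t = 0 ↔
      ∃ i : ℕ, i < w ∧ ((t : ℕ) : ℤ) ≡ (s l : ℤ) + (i : ℤ) [ZMOD (n : ℤ)] := by
    intro l t
    show (m l).eval (α ^ (t : ℕ)) = 0 ↔ _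
    rw [hm]
    simp only [Polynomial.eval_prod]
    rw [Finset.prod_eq_zero_iff]
    constructor
    · rintro ⟨i, hi, hev⟩
      rw [Finset.mem_range] at hi
      refine ⟨i, hi, ?_⟩
      simp only [Polynomial.eval_sub, Polynomial.eval_pow, Polynomial.eval_X,
        Polynomial.eval_C, sub_eq_zero] at hev
      have := (powmod _ _).mp hev
      have hint := Int.natCast_modEq_iff.mpr this
      push_cast at hint ⊢
      exact hint
    · rintro ⟨i, hi, hmod⟩
      refine ⟨i, Finset.mem_range.mpr hi, ?_⟩
      simp only [Polynomial.eval_sub, Polynomial.eval_pow, Polynomial.eval_X,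
        Polynomial.eval_C, sub_eq_zero]
      apply (powmod _ _).mpr
      rw [← Int.natCast_modEq_iff]
      push_cast
      exact hmod
  -- powers of α are injective on Fin n
  have hβinj : Function.Injective (fun l : Fin k => α ^ (s l)) := by
    intro l l' h
    exact hs_inj (hα'.pow_inj (hs_lt l) (hs_lt l') h)
  -- linear independence
  haveI : Nonempty (Fin k) := ⟨⟨0, hk0⟩⟩
  have hα0 : α ≠ 0 := hα'.ne_zero hn0.ne'
  have hcoeff : ∀ (l : Fin k) (p : ℕ), p ≤ w →
      (m l).coeff (w - p) = (α ^ (s l)) ^ p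
        * (∏ i ∈ Finset.range w, (X - C (α ^ i))).coeff (w - p) := by
    intro l p hp
    have hprod : m l = ∏ i ∈ Finset.range w, (X - C (α ^ (s l) * α ^ i)) := by
      rw [hm]
      exact Finset.prod_congr rfl fun i _ => by rw [← pow_add]
    set β : F := α ^ (s l) with hβ
    have hscale := rs_coeff_scale α β w (w - p)
    rw [← hprod] at hscale
    have hβ0 : β ≠ 0 := pow_ne_zero _ hα0
    have hpow : β ^ (w - p) * (β ^ p
        * (∏ i ∈ Finset.range w, (X - C (α ^ i))).coeff (w - p)) = β ^ w
        * (∏ i ∈ Finset.range w, (X - C (α ^ i))).coeff (w - p) := by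
      rw [← mul_assoc, ← pow_add]
      congr 2
      omega
    exact mul_left_cancel₀ (pow_ne_zero (w - p) hβ0) (hscale.trans hpow.symm)
  have he_ne : ∀ jj ≤ w, (∏ i ∈ Finset.range w, (X - C (α ^ i))).coeff jj ≠ 0 :=
    rs_coeff_ne_zero hα' hwn
  have hLI : LinearIndependent F c := by
    rw [Fintype.linearIndependent_iff]
    intro g hg
    -- the polynomial combination vanishes identically
    set G : F[X] := ∑ l : Fin k, C (g l) * m l with hG
    have hGeval : ∀ t : Fin n, G.eval (α ^ (t : ℕ)) = 0 := by
      intro t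
      have := congrFun hg t
      simp only [Finset.sum_apply, Pi.smul_apply, smul_eq_mul] at this
      rw [hG]
      rw [Polynomial.eval_finset_sum]
      simpa [hc] using this
    have hGdeg : G.natDegree < n := by
      apply Nat.lt_of_le_of_lt _ hwn
      apply Polynomial.natDegree_sum_le_of_forall_le
      intro l _
      exact le_trans (Polynomial.natDegree_C_mul_le _ _) (le_of_eq (hm_deg l))
    have hGzero : G = 0 := by
      apply Polynomial.eq_zero_of_natDegree_lt_card_of_eval_eq_zero G
        (f := fun t : Fin n => α ^ (t : ℕ))
      · intro t₁ t₂ h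
        exact Fin.ext (hα'.pow_inj t₁.isLt t₂.isLt h)
      · exact hGeval
      · rwa [Fintype.card_fin]
    -- extract Vandermonde relations
    have hrel : ∀ p : ℕ, p ≤ w → ∑ l : Fin k, g l * (α ^ (s l)) ^ p = 0 := by
      intro p hp
      have hcoeffG : G.coeff (w - p) = 0 := by rw [hGzero]; simp
      rw [hG, Polynomial.finset_sum_coeff] at hcoeffG
      simp only [Polynomial.coeff_C_mul] at hcoeffG
      have : ∑ l : Fin k, g l * ((α ^ (s l)) ^ p
          * (∏ i ∈ Finset.range w, (X - C (α ^ i))).coeff (w - p)) = 0 := by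
        rw [← hcoeffG]
        exact Finset.sum_congr rfl fun l _ => by rw [hcoeff l p hp]
      have h2 : (∑ l : Fin k, g l * (α ^ (s l)) ^ p)
          * (∏ i ∈ Finset.range w, (X - C (α ^ i))).coeff (w - p) = 0 := by
        rw [Finset.sum_mul, ← this]
        exact Finset.sum_congr rfl fun l _ => by ring
      exact (mul_eq_zero.mp h2).resolve_right (he_ne _ (by omega))
    -- Vandermonde
    set M : Matrix (Fin k) (Fin k) F :=
      Matrix.of (fun p l : Fin k => (α ^ (s l)) ^ (p : ℕ)) with hM
    have hdet : M.det ≠ 0 := by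
      have hMeq : M = (Matrix.vandermonde (fun l : Fin k => α ^ (s l)))ᵀ := by
        ext p l
        rfl
      rw [hMeq, Matrix.det_transpose, Matrix.det_vandermonde]
      apply Finset.prod_ne_zero_iff.mpr
      intro i _
      apply Finset.prod_ne_zero_iff.mpr
      intro jj hjj
      rw [Finset.mem_Ioi] at hjj
      exact sub_ne_zero.mpr fun hcon => absurd (hβinj hcon) hjj.ne'
    have hmv : M.mulVec g = 0 := by
      funext p
      show ∑ l : Fin k, M p l * g l = 0
      have := hrel (p : ℕ) (by omega)
      rw [← this]
      exact Finset.sum_congr rfl fun l _ => by rw [hM]; simp [mul_comm]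
    have := Matrix.eq_zero_of_mulVec_eq_zero hdet hmv
    exact fun i => congrFun this i
  refine ⟨fun l => (d : ℤ) - (s l : ℤ), c, ?_, ?_, ?_, ?_, ?_, ?_, ?_⟩
  · -- distinct mod n
    intro l l' hmod
    have h1 : (s l : ℤ) ≡ (s l' : ℤ) [ZMOD (n:ℤ)] := by
      simpa using (Int.ModEq.refl (d : ℤ)).sub hmod
    have h2 : s l ≡ s l' [MOD n] := Int.natCast_modEq_iff.mp h1
    have h3 : s l = s l' := by
      unfold Nat.ModEq at h2
      rwa [Nat.mod_eq_of_lt (hs_lt l), Nat.mod_eq_of_lt (hs_lt l')] at h2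
    exact hs_inj h3
  · -- membership in the code
    intro l
    exact ⟨m l, hm_deg_lt l, fun t => rfl⟩
  · -- vanishing characterization
    intro l t
    rw [hzero l t]
    constructor
    · rintro ⟨i, hi, hmod⟩
      refine ⟨i, hi, ?_⟩
      have heq : (d : ℤ) - ((d : ℤ) - (s l : ℤ)) + (i : ℤ) = (s l : ℤ) + i := by ring
      rw [heq]
      exact hmod
    · rintro ⟨i, hi, hmod⟩
      refine ⟨i, hi, ?_⟩
      have heq : (d : ℤ) - ((d : ℤ) - (s l : ℤ)) + (i : ℤ) = (s l : ℤ) + i := by ring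
      rw [heq] at hmod
      exact hmod
  · -- exactly d nonzero entries per codeword
    intro l
    classical
    have hzc : (Finset.univ.filter (fun t : Fin n => c l t = 0)).card = w := by
      rw [Finset.filter_congr (fun t _ => hzero l t)]
      exact rs_zero_count n (s l) w hn0 hwn.le
    have htot := Finset.card_filter_add_card_filter_not
      (s := (Finset.univ : Finset (Fin n))) (p := fun t => c l t = 0)
    rw [Finset.card_univ, Fintype.card_fin, hzc] at htot
    have : (Finset.univ.filter (fun t : Fin n => ¬ c l t = 0)).card = d := by omega
    exact this
  · -- exactly b nonzero entries per coordinate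
    intro t
    classical
    have hbn : b * n = k * d := by
      rw [hb]
      exact Nat.div_mul_cancel hbint
    have hbk : b ≤ k := by
      by_contra hcon
      push_neg at hcon
      have hdn : d ≤ n := by omega
      nlinarith
    have hwd : w + d = n := by omega
    have hkwn : k * n = k * w + b * n := by
      rw [hbn, ← Nat.mul_add, hwd]
    have hkw : k * w = (k - b) * n := by
      rw [Nat.sub_mul]
      exact (Nat.sub_eq_of_eq_add (by omega)).symm
    have hzc : (Finset.univ.filter (fun l : Fin k => c l t = 0)).card = k - b := by
      have hiff : ∀ l : Fin k, (c l t = 0) ↔ (∃ i : ℕ, i < w ∧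
          ((((l : ℕ) * n / k : ℕ)) : ℤ) ≡ ((t : ℕ) : ℤ) - (i : ℤ) [ZMOD (n : ℤ)]) := by
        intro l
        rw [hzero l t]
        constructor
        · rintro ⟨i, hi, hmod⟩
          refine ⟨i, hi, ?_⟩
          have h2 := (hmod.symm).sub (Int.ModEq.refl (i : ℤ))
          simpa [hs] using h2
        · rintro ⟨i, hi, hmod⟩
          refine ⟨i, hi, ?_⟩
          have h2 := hmod.add (Int.ModEq.refl (i : ℤ))
          simp only [sub_add_cancel] at h2
          exact h2.symm
      rw [Finset.filter_congr (fun l _ => hiff l)]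
      rw [rs_fin_card k (fun x => ∃ i : ℕ, i < w ∧
          (((x * n / k : ℕ)) : ℤ) ≡ ((t : ℕ) : ℤ) - (i : ℤ) [ZMOD (n : ℤ)])]
      exact rs_window_count n k w (k - b) hk0 hwn hkw ((t : ℕ) : ℤ)
    have htot := Finset.card_filter_add_card_filter_not
      (s := (Finset.univ : Finset (Fin k))) (p := fun l => c l t = 0)
    rw [Finset.card_univ, Fintype.card_fin, hzc] at htot
    have : (Finset.univ.filter (fun l : Fin k => ¬ c l t = 0)).card = b := by omega
    exact this
  · exact hLI
  · -- span equals the code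
    classical
    set E : F[X] →ₗ[F] (Fin n → F) :=
      LinearMap.pi (fun t : Fin n => Polynomial.leval (α ^ (t : ℕ))) with hE
    have hcE : c = fun l => E (m l) := rfl
    have hmem : ∀ l, m l ∈ Polynomial.degreeLT F k := fun l =>
      Polynomial.mem_degreeLT.mpr (hm_deg_lt l)
    set m' : Fin k → Polynomial.degreeLT F k := fun l => ⟨m l, hmem l⟩ with hm'
    have hcomp : c = (E.comp (Polynomial.degreeLT F k).subtype) ∘ m' := rfl
    have hLI' : LinearIndependent F m' :=
      LinearIndependent.of_comp (E.comp (Polynomial.degreeLT F k).subtype)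
        (by rw [← hcomp]; exact hLI)
    haveI : Module.Finite F (Polynomial.degreeLT F k) :=
      Module.Finite.equiv (Polynomial.degreeLTEquiv F k).symm
    have hfr : Fintype.card (Fin k) = Module.finrank F (Polynomial.degreeLT F k) := by
      rw [Fintype.card_fin, (Polynomial.degreeLTEquiv F k).finrank_eq, Module.finrank_fin_fun]
    have htop : Submodule.span F (Set.range m') = ⊤ :=
      hLI'.span_eq_top_of_card_eq_finrank hfr
    have hspan_m : Submodule.span F (Set.range m) = Polynomial.degreeLT F k := by
      have hr : Set.range m = (Polynomial.degreeLT F k).subtype '' (Set.range m') := by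
        rw [← Set.range_comp]
        rfl
      rw [hr, Submodule.span_image, htop, Submodule.map_subtype_top]
    have hmapped : Submodule.span F (Set.range c)
        = Submodule.map E (Polynomial.degreeLT F k) := by
      calc Submodule.span F (Set.range c)
          = Submodule.span F (E '' Set.range m) := by
            rw [hcE, ← Set.range_comp]
            rfl
        _ = Submodule.map E (Submodule.span F (Set.range m)) := Submodule.span_image E
        _ = Submodule.map E (Polynomial.degreeLT F k) := by rw [hspan_m]
    rw [hmapped]
    ext v
    simp only [SetLike.mem_coe, Submodule.mem_map, Polynomial.mem_degreeLT, Set.mem_setOf_eq]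
    constructor
    · rintro ⟨p, hp, rfl⟩
      exact ⟨p, hp, fun t => rfl⟩
    · rintro ⟨p, hp, hv⟩
      exact ⟨p, hp, funext fun t => (hv t).symm⟩
end
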